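/- For every natural number n, the sum a_n = ∑_{j=0}^{⌊n/2⌋} (-1)^j * C(n-j, j) satisfies a_n ∈ {-1, 0, 1}, i.e., |∑_{j=0}^{⌊n/2⌋} (-1)^j * C(n-j, j)| ≤ 1. -/
import Mathlib

private def aa (n : ℕ) : ℤ := ∑ j ∈ Finset.range (n / 2 + 1), (-1 : ℤ) ^ j * (Nat.choose (n - j) j : ℤ)

private lemma aa_aux (n : ℕ) :
    ∑ j ∈ Finset.range (n / 2 + 2), (-1 : ℤ) ^ j * (Nat.choose (n + 1 - j) j : ℤ) = aa (n + 1) := by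
  rcases Nat.even_or_odd n with ⟨m, hm⟩ | ⟨m, hm⟩
  · subst hm
    have h1 : (m + m) / 2 = m := by omega
    have h2 : (m + m + 1) / 2 = m := by omega
    rw [aa, h1, h2, Finset.sum_range_succ]
    have : Nat.choose (m + m + 1 - (m + 1)) (m + 1) = 0 :=
      Nat.choose_eq_zero_of_lt (by omega)
    rw [this]
    simp
  · subst hm
    have h1 : (2 * m + 1) / 2 = m := by omega
    have h2 : (2 * m + 1 + 1) / 2 = m + 1 := by omega
    rw [aa, h1, h2]

private lemma aa_rec (n : ℕ) : aa (n + 2) = aa (n + 1) - aa n := by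
  have hd : (n + 2) / 2 + 1 = (n / 2 + 1) + 1 := by omega
  rw [aa, hd, Finset.sum_range_succ']
  have hstep : ∀ j ∈ Finset.range (n / 2 + 1),
      (-1 : ℤ) ^ (j + 1) * (Nat.choose (n + 2 - (j + 1)) (j + 1) : ℤ) =
      -((-1) ^ j * (Nat.choose (n - j) j : ℤ)) +
        (-1) ^ (j + 1) * (Nat.choose (n + 1 - (j + 1)) (j + 1) : ℤ) := by
    intro j hj
    rw [Finset.mem_range] at hj
    have h1 : n + 2 - (j + 1) = (n - j) + 1 := by omega
    have h2 : n + 1 - (j + 1) = n - j := by omega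
    rw [h1, h2, Nat.choose_succ_succ]
    push_cast
    ring
  rw [Finset.sum_congr rfl hstep, Finset.sum_add_distrib]
  have hA : ∑ j ∈ Finset.range (n / 2 + 1),
      -((-1 : ℤ) ^ j * (Nat.choose (n - j) j : ℤ)) = -aa n := by
    rw [aa, ← Finset.sum_neg_distrib]
  have hB : (∑ j ∈ Finset.range (n / 2 + 1),
      (-1 : ℤ) ^ (j + 1) * (Nat.choose (n + 1 - (j + 1)) (j + 1) : ℤ)) +
      (-1 : ℤ) ^ 0 * (Nat.choose (n + 2 - 0) 0 : ℤ) = aa (n + 1) := by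
    rw [← aa_aux n]
    conv_rhs => rw [Finset.sum_range_succ']
    norm_num
  rw [hA]
  have : ∀ x y z : ℤ, -x + y + z = (y + z) - x := by intros; ring
  rw [this]
  simp only [Nat.choose_zero_right] at hB ⊢
  rw [hB]

private def per (n : ℕ) : ℤ :=
  match n % 6 with
  | 0 => 1 | 1 => 1 | 2 => 0 | 3 => -1 | 4 => -1 | _ => 0

private lemma aa_per : ∀ n, aa n = per n ∧ aa (n + 1) = per (n + 1) := by
  intro n
  induction n with
  | zero =>
    constructor <;> simp [aa, per, Finset.sum_range_succ]
  | succ k ih =>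
    refine ⟨ih.2, ?_⟩
    rw [aa_rec, ih.1, ih.2]
    have h6 := Nat.mod_lt k (show 0 < 6 by norm_num)
    have h1 : (k + 1) % 6 = (k % 6 + 1) % 6 := by omega
    have h2 : (k + 2) % 6 = (k % 6 + 2) % 6 := by omega
    unfold per
    rw [h1, h2]
    interval_cases h : k % 6 <;> norm_num

theorem stmt_8 (n : ℕ) :
    |∑ j ∈ Finset.range (n / 2 + 1), (-1 : ℤ) ^ j * (Nat.choose (n - j) j : ℤ)| ≤ 1 := by
  have h : aa n = per n := (aa_per n).1
  rw [aa] at h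
  rw [h]
  unfold per
  have h6 : n % 6 < 6 := Nat.mod_lt n (by norm_num)
  interval_cases h : n % 6 <;> norm_num
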